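/- Let R and S be rings with local units and let P be an R-S-bimodule which is a unitary left R-module. Then the functor P⊗_S− : SMod → RMod is a left adjoint of the functor SHom_R(P,−) : RMod → SMod. -/

import Mathlib

set_option linter.unusedVariables false

/-! ### Core: non-unital rings with local units, modules, homomorphisms, categories -/

universe u v w

open MulOpposite CategoryTheory

/-- A ring with local units: every finite subset is contained in a subring
of the form `eRe` for an idempotent `e`; equivalently, every finite subset
admits an idempotent acting as a two-sided identity on it. -/
class HasLocalUnits (R : Type u) [NonUnitalRing R] : Prop where
  exists_unit : ∀ s : Finset R, ∃ e : R, e * e = e ∧ ∀ x ∈ s, e * x = x ∧ x * e = x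

/-- A (left) module over a non-unital ring. -/
class LMod (R : Type u) [NonUnitalRing R] (M : Type v) [AddCommGroup M] extends SMul R M where
  smul_add' : ∀ (r : R) (m n : M), r • (m + n) = r • m + r • n
  add_smul' : ∀ (r s : R) (m : M), (r + s) • m = r • m + s • m
  mul_smul' : ∀ (r s : R) (m : M), (r * s) • m = r • (s • m)

section basic
variable {R : Type u} [NonUnitalRing R] {M : Type v} [AddCommGroup M] [LMod R M]

theorem LMod.smul_zero' (r : R) : r • (0 : M) = 0 := by
  have h := LMod.smul_add' r (0 : M) 0
  rw [add_zero] at h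
  have h2 : r • (0 : M) + r • (0 : M) = r • (0 : M) + 0 := by rw [← h, add_zero]
  exact add_left_cancel h2

theorem LMod.zero_smul' (m : M) : (0 : R) • m = 0 := by
  have h := LMod.add_smul' (0 : R) 0 m
  rw [add_zero] at h
  have h2 : (0 : R) • m + (0 : R) • m = (0 : R) • m + 0 := by rw [← h, add_zero]
  exact add_left_cancel h2

theorem LMod.smul_neg' (r : R) (m : M) : r • (-m) = -(r • m) := by
  have h : r • m + r • (-m) = 0 := by
    rw [← LMod.smul_add' r m (-m), add_neg_cancel, LMod.smul_zero']
  exact eq_neg_of_add_eq_zero_right h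

end basic

/-- `f : M → N` is a homomorphism of (non-unital) `R`-modules. -/
structure IsLHom (R : Type u) [NonUnitalRing R] {M : Type v} {N : Type w}
    [AddCommGroup M] [AddCommGroup N] [LMod R M] [LMod R N] (f : M → N) : Prop where
  map_add : ∀ x y, f (x + y) = f x + f y
  map_smul : ∀ (r : R) (x : M), f (r • x) = r • f x

theorem IsLHom.map_zero {R : Type u} [NonUnitalRing R] {M : Type v} {N : Type w}
    [AddCommGroup M] [AddCommGroup N] [LMod R M] [LMod R N] {f : M → N}
    (hf : IsLHom R f) : f 0 = 0 := by
  have h := hf.map_add 0 0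
  rw [add_zero] at h
  have h2 : f 0 + f 0 = f 0 + 0 := by rw [← h, add_zero]
  exact add_left_cancel h2

theorem IsLHom.map_neg {R : Type u} [NonUnitalRing R] {M : Type v} {N : Type w}
    [AddCommGroup M] [AddCommGroup N] [LMod R M] [LMod R N] {f : M → N}
    (hf : IsLHom R f) (x : M) : f (-x) = -(f x) := by
  have h : f x + f (-x) = 0 := by rw [← hf.map_add, add_neg_cancel, hf.map_zero]
  exact eq_neg_of_add_eq_zero_right h

/-- The type of homomorphisms of (non-unital) `R`-modules. -/
def LinMap (R : Type u) [NonUnitalRing R] (M : Type v) (N : Type w)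
    [AddCommGroup M] [AddCommGroup N] [LMod R M] [LMod R N] : Type (max v w) :=
  {f : M → N // IsLHom R f}

namespace LinMap

variable {R : Type u} [NonUnitalRing R] {M : Type v} {N : Type w}
    [AddCommGroup M] [AddCommGroup N] [LMod R M] [LMod R N]

theorem ext {f g : LinMap R M N} (h : f.1 = g.1) : f = g := Subtype.ext h

instance : Add (LinMap R M N) :=
  ⟨fun f g => ⟨fun x => f.1 x + g.1 x,
    ⟨fun x y => by rw [f.2.map_add, g.2.map_add]; abel,
     fun r x => by rw [f.2.map_smul, g.2.map_smul, LMod.smul_add']⟩⟩⟩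

instance : Zero (LinMap R M N) :=
  ⟨⟨fun _ => 0, ⟨fun _ _ => by rw [add_zero], fun r _ => (LMod.smul_zero' r).symm⟩⟩⟩

instance : Neg (LinMap R M N) :=
  ⟨fun f => ⟨fun x => -(f.1 x),
    ⟨fun x y => by rw [f.2.map_add]; abel,
     fun r x => by rw [f.2.map_smul, LMod.smul_neg']⟩⟩⟩

instance : AddCommGroup (LinMap R M N) where
  add_assoc f g h := ext (funext fun x => add_assoc _ _ _)
  zero_add f := ext (funext fun x => zero_add _)
  add_zero f := ext (funext fun x => add_zero _)
  add_comm f g := ext (funext fun x => add_comm _ _)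
  neg_add_cancel f := ext (funext fun x => neg_add_cancel _)
  nsmul := nsmulRec
  zsmul := zsmulRec

@[simp] theorem add_apply (f g : LinMap R M N) (x : M) : (f + g).1 x = f.1 x + g.1 x := rfl
@[simp] theorem zero_apply (x : M) : (0 : LinMap R M N).1 x = 0 := rfl
@[simp] theorem neg_apply (f : LinMap R M N) (x : M) : (-f).1 x = -(f.1 x) := rfl

end LinMap

/-- The endomorphism ring of a module over a non-unital ring, with the
"diagrammatic" multiplication `(f * g) x = g (f x)` (i.e. `f * g` means
"first `f`, then `g`", matching homomorphisms written on the right). -/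
instance LinMap.instNonUnitalRing {R : Type u} [NonUnitalRing R] {M : Type v}
    [AddCommGroup M] [LMod R M] : NonUnitalRing (LinMap R M M) :=
  { (inferInstance : AddCommGroup (LinMap R M M)) with
    mul := fun f g => ⟨fun x => g.1 (f.1 x),
      ⟨fun x y => by rw [f.2.map_add, g.2.map_add], fun r x => by rw [f.2.map_smul, g.2.map_smul]⟩⟩
    left_distrib := fun f g h => LinMap.ext (funext fun x => rfl)
    right_distrib := fun f g h => LinMap.ext (funext fun x => h.2.map_add _ _)
    zero_mul := fun f => LinMap.ext (funext fun x => f.2.map_zero)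
    mul_zero := fun f => LinMap.ext (funext fun x => rfl)
    mul_assoc := fun f g h => LinMap.ext (funext fun x => rfl) }

@[simp] theorem LinMap.mul_apply {R : Type u} [NonUnitalRing R] {M : Type v}
    [AddCommGroup M] [LMod R M] (f g : LinMap R M M) (x : M) : (f * g).1 x = g.1 (f.1 x) := rfl

/-- A module `M` over a non-unital ring `R` is unitary if `RM = M`. -/
def IsUnitary (R : Type u) [NonUnitalRing R] (M : Type v) [AddCommGroup M] [LMod R M] : Prop :=
  ∀ m : M, m ∈ AddSubgroup.closure {x : M | ∃ (r : R) (n : M), x = r • n}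

/-- The `R`-submodule (as an additive subgroup) generated by a subset. -/
def lspan (R : Type u) [NonUnitalRing R] {M : Type v} [AddCommGroup M] [LMod R M]
    (X : Set M) : AddSubgroup M :=
  AddSubgroup.closure (X ∪ {m | ∃ (r : R) (x : M), x ∈ X ∧ m = r • x})

/-- A subset `A` of a module is finitely generated (as an `R`-submodule). -/
def IsFGSet (R : Type u) [NonUnitalRing R] {M : Type v} [AddCommGroup M] [LMod R M]
    (A : Set M) : Prop :=
  ∃ s : Finset M, (↑s : Set M) ⊆ A ∧ ∀ a ∈ A, a ∈ lspan R (↑s : Set M)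

/-- A finitely generated module over a non-unital ring. -/
def IsFG (R : Type u) [NonUnitalRing R] (M : Type v) [AddCommGroup M] [LMod R M] : Prop :=
  ∃ s : Finset M, ∀ m : M, m ∈ lspan R (↑s : Set M)

/-- The category of unitary left modules over a ring with local units
(objects: unitary left `R`-modules). -/
structure UMod (R : Type u) [NonUnitalRing R] : Type (max u (v + 1)) where
  carrier : Type v
  [grp : AddCommGroup carrier]
  [mod : LMod R carrier]
  unitary : IsUnitary R carrier

attribute [instance] UMod.grp UMod.mod

instance {R : Type u} [NonUnitalRing R] : CoeSort (UMod.{u, v} R) (Type v) := ⟨UMod.carrier⟩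

instance UMod.instCategory {R : Type u} [NonUnitalRing R] : Category (UMod.{u, v} R) where
  Hom M N := LinMap R M.carrier N.carrier
  id M := ⟨fun x => x, ⟨fun _ _ => rfl, fun _ _ => rfl⟩⟩
  comp f g := ⟨fun x => g.1 (f.1 x),
    ⟨fun x y => by rw [f.2.map_add, g.2.map_add], fun r x => by rw [f.2.map_smul, g.2.map_smul]⟩⟩
  id_comp f := LinMap.ext rfl
  comp_id f := LinMap.ext rfl
  assoc f g h := LinMap.ext rfl

@[simp] theorem UMod.comp_apply {R : Type u} [NonUnitalRing R] {M N K : UMod.{u, v} R}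
    (f : M ⟶ N) (g : N ⟶ K) (x : M.carrier) : (f ≫ g).1 x = g.1 (f.1 x) := rfl

@[simp] theorem UMod.id_apply {R : Type u} [NonUnitalRing R] {M : UMod.{u, v} R}
    (x : M.carrier) : (𝟙 M : M ⟶ M).1 x = x := rfl

instance UMod.instPreadditive {R : Type u} [NonUnitalRing R] :
    Preadditive (UMod.{u, v} R) where
  homGroup M N := inferInstanceAs (AddCommGroup (LinMap R M.carrier N.carrier))
  add_comp M N K f f' g := LinMap.ext (funext fun x => g.2.map_add _ _)
  comp_add M N K f g g' := LinMap.ext (funext fun x => rfl)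

/-- A unitary module `P` is a generator of the category of unitary left `R`-modules. -/
def IsGenerator (R : Type u) [NonUnitalRing R] (P : UMod.{u, v} R) : Prop :=
  ∀ (M B : UMod.{u, v} R) (f g : M ⟶ B), f ≠ g → ∃ h : P ⟶ M, h ≫ f ≠ h ≫ g

/-- A set of unitary modules is a cogenerating set for the category of
unitary left `R`-modules. -/
def IsCogenSet (R : Type u) [NonUnitalRing R] (𝒰 : Set (UMod.{u, v} R)) : Prop :=
  ∀ (B M : UMod.{u, v} R) (f g : B ⟶ M), f ≠ g → ∃ U' ∈ 𝒰, ∃ h : M ⟶ U', f ≫ h ≠ g ≫ h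
/-! ### The largest unitary submodule `C·H` of a module `H`, and induced
module structures on hom-groups -/

section umax

variable (C : Type u) [NonUnitalRing C] (H : Type v) [AddCommGroup H] [LMod C H]

/-- `C·H`, the largest unitary `C`-submodule of the `C`-module `H`. -/
def umax : AddSubgroup H :=
  AddSubgroup.closure {h : H | ∃ (c : C) (h' : H), h = c • h'}

variable {C H}

theorem smul_mem_umax (c : C) (h : H) : c • h ∈ umax C H :=
  AddSubgroup.subset_closure ⟨c, h, rfl⟩

/-- An additive, `C`-equivariant map carries `C·H` into `C·H'`. -/
theorem umax_mapsTo {H' : Type w} [AddCommGroup H'] [LMod C H'] (T : H → H')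
    (hadd : ∀ x y, T (x + y) = T x + T y) (hsmul : ∀ (c : C) (x : H), T (c • x) = c • T x)
    {h : H} (hh : h ∈ umax C H) : T h ∈ umax C H' := by
  have hT : IsLHom C T := ⟨hadd, hsmul⟩
  induction hh using AddSubgroup.closure_induction with
  | mem x hx =>
    obtain ⟨c, h', rfl⟩ := hx
    rw [hsmul]; exact smul_mem_umax c (T h')
  | zero => rw [hT.map_zero]; exact (umax C H').zero_mem
  | add x y hx hy ihx ihy => rw [hadd]; exact (umax C H').add_mem ihx ihy
  | neg x hx ihx => rw [hT.map_neg]; exact (umax C H').neg_mem ihx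

instance umax.instLMod : LMod C ↥(umax C H) where
  smul c h := ⟨c • h.1, smul_mem_umax c h.1⟩
  smul_add' c m n := Subtype.ext (LMod.smul_add' c m.1 n.1)
  add_smul' c c' m := Subtype.ext (LMod.add_smul' c c' m.1)
  mul_smul' c c' m := Subtype.ext (LMod.mul_smul' c c' m.1)

@[simp] theorem umax.smul_coe (c : C) (h : ↥(umax C H)) : (c • h).1 = c • h.1 := rfl

/-- If a second ring `D` acts on `H` commuting with the `C`-action,
then `C·H` is stable under the `D`-action. -/
theorem umax_stable {D : Type w} [NonUnitalRing D] [LMod D H] [SMulCommClass C D H]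
    (d : D) {h : H} (hh : h ∈ umax C H) : d • h ∈ umax C H :=
  umax_mapsTo (fun x => d • x) (fun x y => LMod.smul_add' d x y)
    (fun c x => (smul_comm c d x).symm) hh

instance umax.instLMod₂ {D : Type w} [NonUnitalRing D] [LMod D H] [SMulCommClass C D H] :
    LMod D ↥(umax C H) where
  smul d h := ⟨d • h.1, umax_stable d h.2⟩
  smul_add' d m n := Subtype.ext (LMod.smul_add' d m.1 n.1)
  add_smul' d d' m := Subtype.ext (LMod.add_smul' d d' m.1)
  mul_smul' d d' m := Subtype.ext (LMod.mul_smul' d d' m.1)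

instance umax.instSMulCommClass {D : Type w} [NonUnitalRing D] [LMod D H]
    [SMulCommClass C D H] : SMulCommClass C D ↥(umax C H) :=
  ⟨fun c d h => Subtype.ext (smul_comm c d h.1)⟩

/-- If `C` has local units, then `C·H` is a unitary `C`-module. -/
theorem umax_unitary [HasLocalUnits C] : IsUnitary C ↥(umax C H) := by
  intro m
  obtain ⟨h, hh⟩ := m
  induction hh using AddSubgroup.closure_induction with
  | mem x hx =>
    obtain ⟨c, h', rfl⟩ := hx
    obtain ⟨e, he, hec⟩ := HasLocalUnits.exists_unit {c}
    have hc := (hec c (Finset.mem_singleton_self c)).1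
    refine AddSubgroup.subset_closure ⟨e, ⟨c • h', smul_mem_umax c h'⟩, ?_⟩
    refine Subtype.ext ?_
    show c • h' = e • (c • h')
    rw [← LMod.mul_smul', hc]
  | zero =>
    have : (⟨(0 : H), (umax C H).zero_mem⟩ : ↥(umax C H)) = 0 := rfl
    rw [this]; exact AddSubgroup.zero_mem _
  | add x y hx hy ihx ihy =>
    have : (⟨x + y, (umax C H).add_mem hx hy⟩ : ↥(umax C H)) =
        ⟨x, hx⟩ + ⟨y, hy⟩ := rfl
    rw [this]; exact AddSubgroup.add_mem _ ihx ihy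
  | neg x hx ihx =>
    have : (⟨-x, (umax C H).neg_mem hx⟩ : ↥(umax C H)) = -⟨x, hx⟩ := rfl
    rw [this]; exact AddSubgroup.neg_mem _ ihx

end umax

section regular

variable (R : Type u) [NonUnitalRing R]

/-- The left regular module structure of a non-unital ring on itself. -/
instance NonUnitalRing.instLModSelf : LMod R R where
  smul := (· * ·)
  smul_add' := mul_add
  add_smul' := add_mul
  mul_smul' := mul_assoc

@[simp] theorem NonUnitalRing.smul_def (r s : R) : r • s = r * s := rfl

/-- The right regular module structure, as a left module over the opposite ring. -/
instance NonUnitalRing.instLModSelfOp : LMod Rᵐᵒᵖ R where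
  smul r s := s * r.unop
  smul_add' r m n := add_mul m n r.unop
  add_smul' r r' m := mul_add m r.unop r'.unop
  mul_smul' r r' m := (mul_assoc m r'.unop r.unop).symm

@[simp] theorem NonUnitalRing.op_smul_def (r : Rᵐᵒᵖ) (s : R) : r • s = s * r.unop := rfl

instance : SMulCommClass R Rᵐᵒᵖ R :=
  ⟨fun r s x => by
    show r * (x * s.unop) = (r * x) * s.unop
    rw [mul_assoc]⟩

/-- Local units pass to the opposite ring. -/
instance instHasLocalUnitsOp [HasLocalUnits R] : HasLocalUnits Rᵐᵒᵖ where
  exists_unit s := by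
    classical
    obtain ⟨e, he, h⟩ := HasLocalUnits.exists_unit (R := R) (s.image MulOpposite.unop)
    refine ⟨MulOpposite.op e, by rw [← MulOpposite.op_mul, he], fun x hx => ?_⟩
    have hx' := h x.unop (Finset.mem_image_of_mem MulOpposite.unop hx)
    constructor
    · conv_lhs => rw [← MulOpposite.op_unop x, ← MulOpposite.op_mul, hx'.2, MulOpposite.op_unop]
    · conv_lhs => rw [← MulOpposite.op_unop x, ← MulOpposite.op_mul, hx'.1, MulOpposite.op_unop]

end regular

section homact

variable {A B C : Type u} [NonUnitalRing A] [NonUnitalRing B] [NonUnitalRing C]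
variable {X : Type v} {Y : Type w} [AddCommGroup X] [AddCommGroup Y] [LMod B X] [LMod B Y]

/-- The action of `A` on `Hom_B(X, Y)` by precomposition with the right
`A`-action on `X` (homomorphisms written on the right: `(a • f) x = f (x·a)`). -/
instance LinMap.instLModPre [LMod Aᵐᵒᵖ X] [SMulCommClass B Aᵐᵒᵖ X] :
    LMod A (LinMap B X Y) where
  smul a f := ⟨fun x => f.1 (op a • x),
    ⟨fun x y => by rw [LMod.smul_add', f.2.map_add],
     fun r x => by rw [← smul_comm r (op a) x, f.2.map_smul]⟩⟩
  smul_add' a f g := LinMap.ext rfl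
  add_smul' a a' f := LinMap.ext (funext fun x => by
    show f.1 (op (a + a') • x) = f.1 (op a • x) + f.1 (op a' • x)
    rw [← f.2.map_add, ← LMod.add_smul']
    rfl)
  mul_smul' a a' f := LinMap.ext (funext fun x => by
    show f.1 (op (a * a') • x) = f.1 (op a' • (op a • x))
    rw [← LMod.mul_smul']
    rfl)

theorem LinMap.pre_smul_apply [LMod Aᵐᵒᵖ X] [SMulCommClass B Aᵐᵒᵖ X]
    (a : A) (f : LinMap B X Y) (x : X) : (a • f).1 x = f.1 (op a • x) := rfl

/-- The action of `C` on `Hom_B(X, Y)` by postcomposition with a commuting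
`C`-action on `Y`. -/
instance LinMap.instLModPost [LMod C Y] [SMulCommClass B C Y] :
    LMod C (LinMap B X Y) where
  smul c f := ⟨fun x => c • f.1 x,
    ⟨fun x y => by rw [f.2.map_add, LMod.smul_add'],
     fun r x => by rw [f.2.map_smul]; exact (smul_comm r c (f.1 x)).symm⟩⟩
  smul_add' c f g := LinMap.ext (funext fun x => LMod.smul_add' c (f.1 x) (g.1 x))
  add_smul' c c' f := LinMap.ext (funext fun x => LMod.add_smul' c c' (f.1 x))
  mul_smul' c c' f := LinMap.ext (funext fun x => LMod.mul_smul' c c' (f.1 x))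

theorem LinMap.post_smul_apply [LMod C Y] [SMulCommClass B C Y]
    (c : C) (f : LinMap B X Y) (x : X) : (c • f).1 x = c • (f.1 x) := rfl

/-- Pre- and postcomposition actions on hom-groups commute. -/
instance LinMap.instSMulCommClassPrePost [LMod Aᵐᵒᵖ X] [SMulCommClass B Aᵐᵒᵖ X]
    [LMod C Y] [SMulCommClass B C Y] : SMulCommClass A C (LinMap B X Y) :=
  ⟨fun a c f => LinMap.ext rfl⟩

end homact
/-! ### Split direct systems and direct limits of unitary modules -/

section dirsys

variable (R : Type u) [NonUnitalRing R]

/-- A split direct system of unitary left `R`-modules, indexed by a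
quasi-ordered set `(ι, rel)`: a direct system `(P_i, φ_{ij})` together with
splittings `ψ_{ji} : P_j → P_i` (for `i ≤ j`) such that `φ_{ij} ψ_{ji} = id`
and `ψ_{kj} ψ_{ji} = ψ_{ki}`. -/
structure SplitSystem (ι : Type w) (rel : ι → ι → Prop) : Type (max u w (v + 1)) where
  obj : ι → UMod.{u, v} R
  map : ∀ {i j : ι}, rel i j → (obj i ⟶ obj j)
  split : ∀ {i j : ι}, rel i j → (obj j ⟶ obj i)
  map_self : ∀ {i : ι} (h : rel i i) (x : (obj i).carrier), (map h).1 x = x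
  map_map : ∀ {i j k : ι} (hij : rel i j) (hjk : rel j k) (hik : rel i k)
    (x : (obj i).carrier), (map hjk).1 ((map hij).1 x) = (map hik).1 x
  split_map : ∀ {i j : ι} (h : rel i j) (x : (obj i).carrier),
    (split h).1 ((map h).1 x) = x
  split_split : ∀ {i j k : ι} (hij : rel i j) (hjk : rel j k) (hik : rel i k)
    (x : (obj k).carrier), (split hij).1 ((split hjk).1 x) = (split hik).1 x

/-- `P`, together with homomorphisms `φ_i : P_i → P`, is a direct limit of the
direct system `(P_i, φ_{ij})` (with directed index set): the `φ_i` are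
compatible, every element of `P` comes from some `P_i`, and everything killed
by `φ_i` is eventually killed in the system. -/
structure LimitCocone {ι : Type w} {rel : ι → ι → Prop} (D : SplitSystem.{u, v} R ι rel)
    (P : Type v) [AddCommGroup P] [LMod R P] : Type (max u w v) where
  incl : ∀ i, LinMap R (D.obj i).carrier P
  compat : ∀ {i j : ι} (h : rel i j) (x : (D.obj i).carrier),
    (incl j).1 ((D.map h).1 x) = (incl i).1 x
  exhaustive : ∀ x : P, ∃ (i : ι) (y : (D.obj i).carrier), (incl i).1 y = x
  eventually_zero : ∀ i (y : (D.obj i).carrier), (incl i).1 y = 0 →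
    ∃ j, ∃ h : rel i j, (D.map h).1 y = 0

/-- A unitary left `R`-module is locally projective if it is a direct limit of a
split direct system of finitely generated projective unitary left `R`-modules. -/
def IsLocallyProjective (P : Type v) [AddCommGroup P] [LMod R P] : Prop :=
  ∃ (ι : Type v) (rel : ι → ι → Prop),
    (∀ i, rel i i) ∧ (∀ {i j k}, rel i j → rel j k → rel i k) ∧
    Nonempty ι ∧ (∀ i j, ∃ k, rel i k ∧ rel j k) ∧
    ∃ (D : SplitSystem.{u, v} R ι rel) (_ : LimitCocone R D P),
      ∀ i, IsFG R (D.obj i).carrier ∧ CategoryTheory.Projective (D.obj i)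

variable {R}

/-- The transition maps `Ω_{ij} : End_R(P_i) → End_R(P_j)`, `α ↦ ψ_{ji} α φ_{ij}`,
of the direct system of endomorphism rings associated to a split direct system. -/
def SplitSystem.endTrans {ι : Type w} {rel : ι → ι → Prop}
    (D : SplitSystem.{u, v} R ι rel) {i j : ι} (h : rel i j)
    (a : LinMap R (D.obj i).carrier (D.obj i).carrier) :
    LinMap R (D.obj j).carrier (D.obj j).carrier :=
  ⟨fun x => (D.map h).1 (a.1 ((D.split h).1 x)),
   ⟨fun x y => by rw [(D.split h).2.map_add, a.2.map_add, (D.map h).2.map_add],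
    fun r x => by rw [(D.split h).2.map_smul, a.2.map_smul, (D.map h).2.map_smul]⟩⟩

end dirsys
/-! ### The functor `SHom_R(P,−)` and related constructions for a bimodule `P` -/

section shom

variable (R S : Type u) [NonUnitalRing R] [NonUnitalRing S]
variable (P : Type u) [AddCommGroup P] [LMod R P] [LMod Sᵐᵒᵖ P] [SMulCommClass R Sᵐᵒᵖ P]

/-- `SHom_R(P,M) = S·Hom_R(P,M)`, the largest unitary left `S`-submodule of
`Hom_R(P,M)`, as a type. -/
abbrev SHom (M : Type u) [AddCommGroup M] [LMod R M] : Type u :=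
  ↥(umax S (LinMap R P M))

variable {R S P}

/-- The action of `SHom_R(P,−)` on a homomorphism `g : M → N` (postcomposition). -/
def sHomMap {M N : Type u} [AddCommGroup M] [AddCommGroup N] [LMod R M] [LMod R N]
    (g : LinMap R M N) (α : SHom R S P M) : SHom R S P N :=
  ⟨⟨fun x => g.1 (α.1.1 x),
    ⟨fun x y => by rw [α.1.2.map_add, g.2.map_add],
     fun r x => by rw [α.1.2.map_smul, g.2.map_smul]⟩⟩,
   umax_mapsTo (C := S)
     (fun f => ⟨fun x => g.1 (f.1 x),
       ⟨fun x y => by rw [f.2.map_add, g.2.map_add],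
        fun r x => by rw [f.2.map_smul, g.2.map_smul]⟩⟩)
     (fun f f' => LinMap.ext (funext fun x => g.2.map_add _ _))
     (fun s f => LinMap.ext rfl) α.2⟩

theorem sHomMap_apply {M N : Type u} [AddCommGroup M] [AddCommGroup N] [LMod R M]
    [LMod R N] (g : LinMap R M N) (α : SHom R S P M) (x : P) :
    ((sHomMap g α).1).1 x = g.1 (α.1.1 x) := rfl

theorem sHomMap_add {M N : Type u} [AddCommGroup M] [AddCommGroup N] [LMod R M]
    [LMod R N] (g : LinMap R M N) (α β : SHom R S P M) :
    sHomMap g (α + β) = sHomMap g α + sHomMap g β :=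
  Subtype.ext (LinMap.ext (funext fun x =>
    show g.1 (α.1.1 x + β.1.1 x) = g.1 (α.1.1 x) + g.1 (β.1.1 x) from g.2.map_add _ _))

theorem sHomMap_smul {M N : Type u} [AddCommGroup M] [AddCommGroup N] [LMod R M]
    [LMod R N] (g : LinMap R M N) (s : S) (α : SHom R S P M) :
    sHomMap g (s • α) = s • sHomMap g α :=
  Subtype.ext (LinMap.ext (funext fun x => rfl))

/-- `SHom_R(P,g)` as a homomorphism of `S`-modules. -/
def sHomLin {M N : Type u} [AddCommGroup M] [AddCommGroup N] [LMod R M] [LMod R N]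
    (g : LinMap R M N) : LinMap S (SHom R S P M) (SHom R S P N) :=
  ⟨sHomMap g, ⟨sHomMap_add g, fun s α => sHomMap_smul g s α⟩⟩

variable (R S P)

/-- The functor `SHom_R(P,−)` from unitary left `R`-modules to unitary left
`S`-modules. -/
def sHomF [HasLocalUnits S] : UMod.{u, u} R ⥤ UMod.{u, u} S where
  obj M := ⟨SHom R S P M.carrier, umax_unitary⟩
  map g := sHomLin g
  map_id M := LinMap.ext (funext fun α => Subtype.ext (LinMap.ext (funext fun x => rfl)))
  map_comp f g := LinMap.ext (funext fun α => Subtype.ext (LinMap.ext (funext fun x => rfl)))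

/-- `G_P = SHom_R(P,R)`, an `S`-`R`-bimodule. -/
abbrev GP : Type u := ↥(umax S (LinMap R P R))

/-- `RHom_S(G_P, N) = R·Hom_S(G_P, N)`, as a type. -/
abbrev RHomG (N : Type u) [AddCommGroup N] [LMod S N] : Type u :=
  ↥(umax R (LinMap S (GP R S P) N))

variable {R S P}

/-- The action of `RHom_S(G_P,−)` on a homomorphism of `S`-modules. -/
def rHomGMap {N N' : Type u} [AddCommGroup N] [AddCommGroup N'] [LMod S N] [LMod S N']
    (g : LinMap S N N') (α : RHomG R S P N) : RHomG R S P N' :=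
  ⟨⟨fun β => g.1 (α.1.1 β),
    ⟨fun x y => by rw [α.1.2.map_add, g.2.map_add],
     fun s x => by rw [α.1.2.map_smul, g.2.map_smul]⟩⟩,
   umax_mapsTo (C := R)
     (fun f => ⟨fun β => g.1 (f.1 β),
       ⟨fun x y => by rw [f.2.map_add, g.2.map_add],
        fun s x => by rw [f.2.map_smul, g.2.map_smul]⟩⟩)
     (fun f f' => LinMap.ext (funext fun β => g.2.map_add _ _))
     (fun r f => LinMap.ext rfl) α.2⟩

variable (R S P)

/-- The functor `RHom_S(G_P,−)` from unitary left `S`-modules to unitary left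
`R`-modules. -/
def rHomGF [HasLocalUnits R] : UMod.{u, u} S ⥤ UMod.{u, u} R where
  obj N := ⟨RHomG R S P N.carrier, umax_unitary⟩
  map g := ⟨rHomGMap g,
    ⟨fun α β => Subtype.ext (LinMap.ext (funext fun x =>
       show g.1 (α.1.1 x + β.1.1 x) = g.1 (α.1.1 x) + g.1 (β.1.1 x) from g.2.map_add _ _)),
     fun r α => Subtype.ext (LinMap.ext (funext fun x => rfl))⟩⟩
  map_id N := LinMap.ext (funext fun α => Subtype.ext (LinMap.ext (funext fun x => rfl)))
  map_comp f g := LinMap.ext (funext fun α => Subtype.ext (LinMap.ext (funext fun x => rfl)))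

variable {R S P}

/-- The inner component of the evaluation map `γ`: for `n ∈ N` and
`β ∈ Hom_R(P,R)`, the homomorphism `P → N`, `x ↦ (x)β·n`. -/
def gammaInner {N : Type u} [AddCommGroup N] [LMod R N] (n : N) (β : LinMap R P R) :
    LinMap R P N :=
  ⟨fun x => (β.1 x) • n,
   ⟨fun x y => by rw [β.2.map_add, LMod.add_smul'],
    fun r x => by rw [β.2.map_smul, NonUnitalRing.smul_def, LMod.mul_smul']⟩⟩

theorem gammaInner_mem {N : Type u} [AddCommGroup N] [LMod R N] (n : N)
    {β : LinMap R P R} (hβ : β ∈ umax S (LinMap R P R)) :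
    gammaInner n β ∈ umax S (LinMap R P N) :=
  umax_mapsTo (C := S) (fun β => gammaInner n β)
    (fun β β' => LinMap.ext (funext fun x => LMod.add_smul' _ _ _))
    (fun s β => LinMap.ext rfl) hβ

variable (R S P)

/-- The evaluation map `γ_N : N → RHom_S(G_P, SHom_R(P,N))` (before checking that
its values lie in the unitary part `R·Hom_S(G_P, SHom_R(P,N))`):
`n ↦ (β ↦ (x ↦ (x)β·n))`. -/
def gammaFun (N : Type u) [AddCommGroup N] [LMod R N] (n : N) :
    LinMap S (GP R S P) (SHom R S P N) :=
  ⟨fun β => ⟨gammaInner n β.1, gammaInner_mem n β.2⟩,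
   ⟨fun β β' => Subtype.ext (LinMap.ext (funext fun x => LMod.add_smul' _ _ _)),
    fun s β => Subtype.ext (LinMap.ext rfl)⟩⟩

/-- The `s`-trace `sTr(P,M) = Σ_{g ∈ SHom_R(P,M)} Im g` of `P` in `M`. -/
def sTrSub (M : Type u) [AddCommGroup M] [LMod R M] : AddSubgroup M :=
  AddSubgroup.closure {m : M | ∃ f : LinMap R P M, f ∈ umax S (LinMap R P M) ∧ ∃ x : P, m = f.1 x}

/-- `st_P(M) = 0`: the only `R`-submodule `K ⊆ M` with `SHom_R(P,K) = 0` is the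
zero submodule (equivalently, the sum of all such submodules is zero). -/
def stPZero (M : Type u) [AddCommGroup M] [LMod R M] : Prop :=
  ∀ K : AddSubgroup M, (∀ (r : R) (x : M), x ∈ K → r • x ∈ K) →
    (∀ (s : S) (f : LinMap R P M), (∀ x : P, f.1 x ∈ K) → s • f = 0) →
    ∀ m ∈ K, m = 0

/-- `SHom_R(P,X) = 0`. -/
def sHomZero (X : Type u) [AddCommGroup X] [LMod R X] : Prop :=
  ∀ f : LinMap R P X, f ∈ umax S (LinMap R P X) → f = 0

end shom
/-! ### Bimodules, dual hom functors, reflexivity, Morita duality bimodules,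
finiteness conditions -/

section bimod

variable (R S : Type u) [NonUnitalRing R] [NonUnitalRing S]

/-- A bundled `R`-`S`-bimodule over non-unital rings. -/
structure BimodLU : Type (u + 1) where
  carrier : Type u
  [grp : AddCommGroup carrier]
  [lmod : LMod R carrier]
  [rmod : LMod Sᵐᵒᵖ carrier]
  [comm : SMulCommClass R Sᵐᵒᵖ carrier]
  [comm' : SMulCommClass Sᵐᵒᵖ R carrier]

attribute [instance] BimodLU.grp BimodLU.lmod BimodLU.rmod BimodLU.comm BimodLU.comm'

variable (U : Type u) [AddCommGroup U] [LMod R U] [LMod Sᵐᵒᵖ U] [SMulCommClass R Sᵐᵒᵖ U]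
  [SMulCommClass Sᵐᵒᵖ R U]

/-- The canonical map `μ : S → End_R(U)`, `s ↦ (x ↦ x·s)`. -/
def muMap (s : S) : LinMap R U U :=
  ⟨fun x => op s • x,
   ⟨fun x y => LMod.smul_add' (op s) x y, fun r x => (smul_comm r (op s) x).symm⟩⟩

/-- The canonical map `λ : R → End_S(U)`, `r ↦ (x ↦ r·x)`. -/
def lambdaMap (r : R) : LinMap Sᵐᵒᵖ U U :=
  ⟨fun x => r • x,
   ⟨fun x y => LMod.smul_add' r x y, fun s x => smul_comm r s x⟩⟩

/-- `Hom_R(M,U)S`, the largest unitary right `S`-submodule of `Hom_R(M,U)`,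
as a type (a right `S`-module, i.e. a left `Sᵐᵒᵖ`-module). -/
abbrev DHomL (M : Type u) [AddCommGroup M] [LMod R M] : Type u :=
  ↥(umax Sᵐᵒᵖ (LinMap R M U))

/-- `RHom_S(N,U)`, the largest unitary left `R`-submodule of `Hom_S(N,U)`
for a right `S`-module `N`, as a type. -/
abbrev DHomR (N : Type u) [AddCommGroup N] [LMod Sᵐᵒᵖ N] : Type u :=
  ↥(umax R (LinMap Sᵐᵒᵖ N U))

variable {R S U}

/-- Action of the contravariant functor `Hom_R(−,U)S` on morphisms
(precomposition). -/
def dHomLMap {M N : Type u} [AddCommGroup M] [AddCommGroup N] [LMod R M] [LMod R N]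
    (f : LinMap R M N) (α : DHomL R S U N) : DHomL R S U M :=
  ⟨⟨fun x => α.1.1 (f.1 x),
    ⟨fun x y => by rw [f.2.map_add, α.1.2.map_add],
     fun r x => by rw [f.2.map_smul, α.1.2.map_smul]⟩⟩,
   umax_mapsTo (C := Sᵐᵒᵖ)
     (fun g => ⟨fun x => g.1 (f.1 x),
       ⟨fun x y => by rw [f.2.map_add, g.2.map_add],
        fun r x => by rw [f.2.map_smul, g.2.map_smul]⟩⟩)
     (fun g g' => LinMap.ext rfl) (fun s g => LinMap.ext rfl) α.2⟩

/-- Action of the contravariant functor `RHom_S(−,U)` on morphisms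
(precomposition). -/
def dHomRMap {M N : Type u} [AddCommGroup M] [AddCommGroup N] [LMod Sᵐᵒᵖ M]
    [LMod Sᵐᵒᵖ N] (f : LinMap Sᵐᵒᵖ M N) (α : DHomR R S U N) : DHomR R S U M :=
  ⟨⟨fun x => α.1.1 (f.1 x),
    ⟨fun x y => by rw [f.2.map_add, α.1.2.map_add],
     fun s x => by rw [f.2.map_smul, α.1.2.map_smul]⟩⟩,
   umax_mapsTo (C := R)
     (fun g => ⟨fun x => g.1 (f.1 x),
       ⟨fun x y => by rw [f.2.map_add, g.2.map_add],
        fun s x => by rw [f.2.map_smul, g.2.map_smul]⟩⟩)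
     (fun g g' => LinMap.ext rfl) (fun r g => LinMap.ext rfl) α.2⟩

variable (R S U)

/-- The contravariant functor `Hom_R(−,U)S` from unitary left `R`-modules to
unitary right `S`-modules. -/
def dualL [HasLocalUnits S] : (UMod.{u, u} R)ᵒᵖ ⥤ UMod.{u, u} Sᵐᵒᵖ where
  obj M := ⟨DHomL R S U M.unop.carrier, umax_unitary⟩
  map f := ⟨dHomLMap f.unop,
    ⟨fun α β => Subtype.ext (LinMap.ext (funext fun x => rfl)),
     fun s α => Subtype.ext (LinMap.ext (funext fun x => rfl))⟩⟩
  map_id M := LinMap.ext (funext fun α => Subtype.ext (LinMap.ext (funext fun x => rfl)))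
  map_comp f g := LinMap.ext (funext fun α => Subtype.ext (LinMap.ext (funext fun x => rfl)))

/-- The contravariant functor `RHom_S(−,U)` from unitary right `S`-modules to
unitary left `R`-modules. -/
def dualR [HasLocalUnits R] : (UMod.{u, u} Sᵐᵒᵖ)ᵒᵖ ⥤ UMod.{u, u} R where
  obj N := ⟨DHomR R S U N.unop.carrier, umax_unitary⟩
  map f := ⟨dHomRMap f.unop,
    ⟨fun α β => Subtype.ext (LinMap.ext (funext fun x => rfl)),
     fun r α => Subtype.ext (LinMap.ext (funext fun x => rfl))⟩⟩
  map_id N := LinMap.ext (funext fun α => Subtype.ext (LinMap.ext (funext fun x => rfl)))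
  map_comp f g := LinMap.ext (funext fun α => Subtype.ext (LinMap.ext (funext fun x => rfl)))

/-- The underlying function of the evaluation map
`φ_X : X → RHom_S(Hom_R(X,U)S, U)`, `(x)φ_X : β ↦ (x)β`. -/
def evalFunL (X : Type u) [AddCommGroup X] [LMod R X] (x : X) :
    LinMap Sᵐᵒᵖ (DHomL R S U X) U :=
  ⟨fun β => β.1.1 x, ⟨fun β β' => rfl, fun s β => rfl⟩⟩

/-- A unitary left `R`-module `X` is `U`-reflexive: the evaluation map
`φ_X : X → RHom_S(Hom_R(X,U)S, U)` is an isomorphism. -/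
def IsLReflexive (X : Type u) [AddCommGroup X] [LMod R X] : Prop :=
  ∃ h : ∀ x : X, evalFunL R S U X x ∈ umax R (LinMap Sᵐᵒᵖ (DHomL R S U X) U),
    Function.Bijective (fun x : X => (⟨evalFunL R S U X x, h x⟩ : DHomR R S U (DHomL R S U X)))

/-- The underlying function of the evaluation map
`ψ_Y : Y → Hom_R(RHom_S(Y,U),U)S`, `ψ_Y(y) : α ↦ α(y)`. -/
def evalFunR (Y : Type u) [AddCommGroup Y] [LMod Sᵐᵒᵖ Y] (y : Y) :
    LinMap R (DHomR R S U Y) U :=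
  ⟨fun α => α.1.1 y, ⟨fun α α' => rfl, fun r α => rfl⟩⟩

/-- A unitary right `S`-module `Y` is `U`-reflexive: the evaluation map
`ψ_Y : Y → Hom_R(RHom_S(Y,U),U)S` is an isomorphism. -/
def IsRReflexive (Y : Type u) [AddCommGroup Y] [LMod Sᵐᵒᵖ Y] : Prop :=
  ∃ h : ∀ y : Y, evalFunR R S U Y y ∈ umax Sᵐᵒᵖ (LinMap R (DHomR R S U Y) U),
    Function.Bijective (fun y : Y => (⟨evalFunR R S U Y y, h y⟩ : DHomL R S U (DHomR R S U Y)))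

/-- Properties (I) and (II) of a Morita duality bimodule: `U` is the direct
limit of a split direct system of finitely generated injective unitary left
`R`-modules whose members form a cogenerating set for the category of unitary
left `R`-modules, and `μ : S → End_R(U)` is a monomorphism whose image is
exactly the set of endomorphisms factoring through one of the induced
projections. -/
def SatisfiesI_II : Prop :=
  ∃ (ι : Type u) (rel : ι → ι → Prop),
    (∀ i, rel i i) ∧ (∀ {i j k}, rel i j → rel j k → rel i k) ∧
    Nonempty ι ∧ (∀ i j, ∃ k, rel i k ∧ rel j k) ∧
    ∃ (D : SplitSystem.{u, u} R ι rel) (c : LimitCocone R D U)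
      (proj : ∀ i, LinMap R U (D.obj i).carrier),
      (∀ i, IsFG R (D.obj i).carrier ∧ CategoryTheory.Injective (D.obj i)) ∧
      IsCogenSet R {M | ∃ i, M = D.obj i} ∧
      (∀ i (x : (D.obj i).carrier), (proj i).1 ((c.incl i).1 x) = x) ∧
      (∀ {i j} (h : rel i j) (x : U), (D.split h).1 ((proj j).1 x) = (proj i).1 x) ∧
      Function.Injective (muMap R S U) ∧
      Set.range (muMap R S U) =
        {g : LinMap R U U | ∃ (i : ι) (γ : LinMap R (D.obj i).carrier U),
          g.1 = fun x => γ.1 ((proj i).1 x)}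

/-- Properties (III) and (IV) of a Morita duality bimodule (the right-module
side, dual to (I) and (II)). -/
def SatisfiesIII_IV : Prop :=
  ∃ (ι : Type u) (rel : ι → ι → Prop),
    (∀ i, rel i i) ∧ (∀ {i j k}, rel i j → rel j k → rel i k) ∧
    Nonempty ι ∧ (∀ i j, ∃ k, rel i k ∧ rel j k) ∧
    ∃ (D : SplitSystem.{u, u} Sᵐᵒᵖ ι rel) (c : LimitCocone Sᵐᵒᵖ D U)
      (proj : ∀ i, LinMap Sᵐᵒᵖ U (D.obj i).carrier),
      (∀ i, IsFG Sᵐᵒᵖ (D.obj i).carrier ∧ CategoryTheory.Injective (D.obj i)) ∧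
      IsCogenSet Sᵐᵒᵖ {M | ∃ i, M = D.obj i} ∧
      (∀ i (x : (D.obj i).carrier), (proj i).1 ((c.incl i).1 x) = x) ∧
      (∀ {i j} (h : rel i j) (x : U), (D.split h).1 ((proj j).1 x) = (proj i).1 x) ∧
      Function.Injective (lambdaMap R S U) ∧
      Set.range (lambdaMap R S U) =
        {g : LinMap Sᵐᵒᵖ U U | ∃ (i : ι) (γ : LinMap Sᵐᵒᵖ (D.obj i).carrier U),
          g.1 = fun x => γ.1 ((proj i).1 x)}

/-- A Morita duality `R`-`S`-bimodule. -/
def IsMoritaDualityBimod : Prop :=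
  IsUnitary R U ∧ IsUnitary Sᵐᵒᵖ U ∧ SatisfiesI_II R S U ∧ SatisfiesIII_IV R S U

end bimod

section cats

variable (R : Type u) [NonUnitalRing R]

/-- The category of finitely generated unitary left `R`-modules. -/
abbrev FGMod := CategoryTheory.ObjectProperty.FullSubcategory (fun M : UMod.{u, u} R => IsFG R M.carrier)

/-- The category of finitely generated injective unitary left `R`-modules. -/
abbrev InjFGMod := CategoryTheory.ObjectProperty.FullSubcategory
  (fun M : UMod.{u, u} R => IsFG R M.carrier ∧ CategoryTheory.Injective M)

/-- The category of finitely generated projective unitary left `R`-modules. -/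
abbrev ProjFGMod := CategoryTheory.ObjectProperty.FullSubcategory
  (fun M : UMod.{u, u} R => IsFG R M.carrier ∧ CategoryTheory.Projective M)

/-- There is a duality (an additive contravariant equivalence) between the
categories of finitely generated unitary left `R`-modules and finitely
generated unitary right `S`-modules. -/
def ExistsFGDuality (R S : Type u) [NonUnitalRing R] [NonUnitalRing S] : Prop :=
  ∃ F : (FGMod R)ᵒᵖ ⥤ FGMod Sᵐᵒᵖ, F.Additive ∧ F.IsEquivalence

/-- Bundled ring with local units. -/
structure RingLU : Type (u + 1) where
  carrier : Type u
  [ring : NonUnitalRing carrier]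
  [lu : HasLocalUnits carrier]

attribute [instance] RingLU.ring RingLU.lu

/-- A ring with local units is left Morita if there is a ring `R'` with local
units and a duality from finitely generated unitary left `R`-modules to
finitely generated unitary right `R'`-modules. -/
def IsLeftMorita : Prop :=
  ∃ R' : RingLU.{u}, ExistsFGDuality R R'.carrier

/-- `R` is left locally finite: every finitely generated unitary left
`R`-module has finite length (equivalently, the lengths of chains of
submodules of such a module are bounded). -/
def IsLeftLocallyFinite : Prop :=
  ∀ (M : Type u) [AddCommGroup M] [LMod R M], IsUnitary R M → IsFG R M →
    ∃ n : ℕ, ∀ c : Fin (n + 1) → AddSubgroup M,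
      (∀ i (r : R) x, x ∈ c i → r • x ∈ c i) →
      ¬(∀ i : Fin n, c i.castSucc < c i.succ)

/-- `R` is left locally noetherian: every finitely generated unitary left
`R`-module is noetherian. -/
def IsLeftLocallyNoetherian : Prop :=
  ∀ (M : Type u) [AddCommGroup M] [LMod R M], IsUnitary R M → IsFG R M →
    ∀ c : ℕ → AddSubgroup M, (∀ i (r : R) x, x ∈ c i → r • x ∈ c i) →
      (∀ i, c i ≤ c (i + 1)) → ∃ n, ∀ m, n ≤ m → c m = c n

end cats

section principal

variable (R : Type u) [NonUnitalRing R]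

/-- The principal left ideal `Re` of a non-unital ring, for an element `e`. -/
def principalLeft (e : R) : AddSubgroup R where
  carrier := {y : R | ∃ r : R, y = r * e}
  add_mem' := by
    rintro a b ⟨r, hr⟩ ⟨s, hs⟩
    exact ⟨r + s, by rw [hr, hs, add_mul]⟩
  zero_mem' := ⟨0, by rw [zero_mul]⟩
  neg_mem' := by
    rintro a ⟨r, hr⟩
    exact ⟨-r, by rw [hr, neg_mul]⟩

instance (e : R) : LMod R ↥(principalLeft R e) where
  smul r y := ⟨r * y.1, by obtain ⟨s, hs⟩ := y.2; exact ⟨r * s, by rw [hs, mul_assoc]⟩⟩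
  smul_add' r m n := Subtype.ext (mul_add r m.1 n.1)
  add_smul' r s m := Subtype.ext (add_mul r s m.1)
  mul_smul' r s m := Subtype.ext (mul_assoc r s m.1)

/-- The principal right ideal `fS` of a non-unital ring, as a right module
(left module over the opposite ring). -/
def principalRight (f : R) : AddSubgroup R where
  carrier := {y : R | ∃ s : R, y = f * s}
  add_mem' := by
    rintro a b ⟨r, hr⟩ ⟨s, hs⟩
    exact ⟨r + s, by rw [hr, hs, mul_add]⟩
  zero_mem' := ⟨0, by rw [mul_zero]⟩
  neg_mem' := by
    rintro a ⟨r, hr⟩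
    exact ⟨-r, by rw [hr, mul_neg]⟩

instance (f : R) : LMod Rᵐᵒᵖ ↥(principalRight R f) where
  smul s y := ⟨y.1 * s.unop, by
    obtain ⟨t, ht⟩ := y.2; exact ⟨t * s.unop, by rw [ht, mul_assoc]⟩⟩
  smul_add' s m n := Subtype.ext (add_mul m.1 n.1 s.unop)
  add_smul' s t m := Subtype.ext (mul_add m.1 s.unop t.unop)
  mul_smul' s t m := Subtype.ext (mul_assoc m.1 t.unop s.unop).symm

end principal

section restr

variable (R S : Type u) [NonUnitalRing R] [NonUnitalRing S] [HasLocalUnits R] [HasLocalUnits S]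
variable (U : Type u) [AddCommGroup U] [LMod R U] [LMod Sᵐᵒᵖ U] [SMulCommClass R Sᵐᵒᵖ U]
  [SMulCommClass Sᵐᵒᵖ R U]

/-- The restriction of the contravariant functor `Hom_R(−,U)S` to finitely
generated modules, given that it preserves finite generation. -/
def dualLRestr (hFG : ∀ X : UMod.{u, u} R, IsFG R X.carrier →
    IsFG Sᵐᵒᵖ ((dualL R S U).obj (Opposite.op X)).carrier) :
    (FGMod R)ᵒᵖ ⥤ FGMod Sᵐᵒᵖ :=
  CategoryTheory.ObjectProperty.lift _
    ((CategoryTheory.ObjectProperty.ι _).op ⋙ dualL R S U)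
    (fun X => hFG X.unop.obj X.unop.property)

/-- The restriction of the contravariant functor `RHom_S(−,U)` to finitely
generated modules, given that it preserves finite generation. -/
def dualRRestr (hFG : ∀ Y : UMod.{u, u} Sᵐᵒᵖ, IsFG Sᵐᵒᵖ Y.carrier →
    IsFG R ((dualR R S U).obj (Opposite.op Y)).carrier) :
    (FGMod Sᵐᵒᵖ)ᵒᵖ ⥤ FGMod R :=
  CategoryTheory.ObjectProperty.lift _
    ((CategoryTheory.ObjectProperty.ι _).op ⋙ dualR R S U)
    (fun Y => hFG Y.unop.obj Y.unop.property)

end restr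
/-! ### Direct sums of modules over non-unital rings -/

section dfinsupp

variable {R : Type u} [NonUnitalRing R] {ι : Type v} {β : ι → Type w}
  [∀ i, AddCommGroup (β i)] [∀ i, LMod R (β i)]

/-- Pointwise scalar action on a direct sum. -/
def dfinsuppSMul (r : R) (f : Π₀ i, β i) : Π₀ i, β i :=
  f.mapRange (fun _ x => r • x) (fun _ => LMod.smul_zero' r)

theorem dfinsuppSMul_apply (r : R) (f : Π₀ i, β i) (i : ι) :
    dfinsuppSMul r f i = r • f i := DFinsupp.mapRange_apply _ _ f i

instance DFinsupp.instLMod : LMod R (Π₀ i, β i) where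
  smul := dfinsuppSMul
  smul_add' r f g := by
    ext i
    show dfinsuppSMul r (f + g) i = (dfinsuppSMul r f + dfinsuppSMul r g) i
    rw [DFinsupp.add_apply, dfinsuppSMul_apply, dfinsuppSMul_apply, dfinsuppSMul_apply,
      DFinsupp.add_apply]
    exact LMod.smul_add' r (f i) (g i)
  add_smul' r s f := by
    ext i
    show dfinsuppSMul (r + s) f i = (dfinsuppSMul r f + dfinsuppSMul s f) i
    rw [DFinsupp.add_apply, dfinsuppSMul_apply, dfinsuppSMul_apply, dfinsuppSMul_apply]
    exact LMod.add_smul' r s (f i)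
  mul_smul' r s f := by
    ext i
    show dfinsuppSMul (r * s) f i = dfinsuppSMul r (dfinsuppSMul s f) i
    rw [dfinsuppSMul_apply, dfinsuppSMul_apply, dfinsuppSMul_apply]
    exact LMod.mul_smul' r s (f i)

@[simp] theorem DFinsupp.lmod_smul_apply (r : R) (f : Π₀ i, β i) (i : ι) :
    (r • f) i = r • f i := dfinsuppSMul_apply r f i

end dfinsupp
/-! ### Miscellaneous helpers: submodule stability, `Pf`, traces, sums -/

section extra

variable {R : Type u} [NonUnitalRing R] {M : Type v} [AddCommGroup M] [LMod R M]

theorem closure_smul_stable {s : Set M}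
    (h : ∀ (r : R) (x : M), x ∈ s → r • x ∈ AddSubgroup.closure s) (r : R) {x : M}
    (hx : x ∈ AddSubgroup.closure s) : r • x ∈ AddSubgroup.closure s := by
  induction hx using AddSubgroup.closure_induction with
  | mem y hy => exact h r y hy
  | zero => rw [LMod.smul_zero']; exact AddSubgroup.zero_mem _
  | add y z hy hz ihy ihz => rw [LMod.smul_add']; exact AddSubgroup.add_mem _ ihy ihz
  | neg y hy ihy => rw [LMod.smul_neg']; exact AddSubgroup.neg_mem _ ihy

end extra

section pe

variable (R S : Type u) [NonUnitalRing R] [NonUnitalRing S]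
variable (P : Type u) [AddCommGroup P] [LMod R P] [LMod Sᵐᵒᵖ P] [SMulCommClass R Sᵐᵒᵖ P]

/-- The submodule `Pf = {x·f | x ∈ P}` of `P`, for `f ∈ S`. -/
def peSub (f : S) : AddSubgroup P where
  carrier := Set.range (fun x : P => (op f : Sᵐᵒᵖ) • x)
  add_mem' := by
    rintro a b ⟨x, rfl⟩ ⟨y, rfl⟩
    exact ⟨x + y, LMod.smul_add' (op f) x y⟩
  zero_mem' := ⟨0, LMod.smul_zero' _⟩
  neg_mem' := by
    rintro a ⟨x, rfl⟩
    exact ⟨-x, LMod.smul_neg' (op f) x⟩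

instance (f : S) : LMod R ↥(peSub S P f) where
  smul r y := ⟨r • y.1, by
    obtain ⟨x, hx⟩ := y.2
    exact ⟨r • x, by rw [← hx, smul_comm]⟩⟩
  smul_add' r m n := Subtype.ext (LMod.smul_add' r m.1 n.1)
  add_smul' r s m := Subtype.ext (LMod.add_smul' r s m.1)
  mul_smul' r s m := Subtype.ext (LMod.mul_smul' r s m.1)

variable {R S P} in
theorem sTrSub_smul_stable {M : Type u} [AddCommGroup M] [LMod R M] (r : R) {m : M}
    (hm : m ∈ sTrSub R S P M) : r • m ∈ sTrSub R S P M := by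
  refine closure_smul_stable (fun r' x hx => ?_) r hm
  obtain ⟨g, hg, y, rfl⟩ := hx
  exact AddSubgroup.subset_closure ⟨g, hg, r' • y, (g.2.map_smul r' y).symm⟩

instance (M : Type u) [AddCommGroup M] [LMod R M] : LMod R ↥(sTrSub R S P M) where
  smul r y := ⟨r • y.1, sTrSub_smul_stable r y.2⟩
  smul_add' r m n := Subtype.ext (LMod.smul_add' r m.1 n.1)
  add_smul' r s m := Subtype.ext (LMod.add_smul' r s m.1)
  mul_smul' r s m := Subtype.ext (LMod.mul_smul' r s m.1)

end pe

section sum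

/-- Summation over a direct sum against a family of additive maps
(the canonical map `⊕_I M_i → N`). -/
noncomputable def dfinsuppSum {ι : Type u} {β : ι → Type v} [∀ i, AddCommGroup (β i)]
    {γ : Type w} [AddCommGroup γ] (f : ∀ i, β i →+ γ) (x : Π₀ i, β i) : γ :=
  letI := Classical.decEq ι
  DFinsupp.sumAddHom f x

end sum
/-! ### The tensor product `P ⊗_S N` over a non-unital ring `S` -/

section tensor

variable (R S : Type u) [NonUnitalRing R] [NonUnitalRing S]
variable (P : Type u) [AddCommGroup P] [LMod R P] [LMod Sᵐᵒᵖ P] [SMulCommClass R Sᵐᵒᵖ P]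
variable (N : Type u) [AddCommGroup N] [LMod S N]

/-- The subgroup of relations defining the balanced tensor product `P ⊗_S N`. -/
def tensorRel : AddSubgroup (FreeAbelianGroup (P × N)) :=
  AddSubgroup.closure
    ({x | ∃ (p p' : P) (n : N), x = FreeAbelianGroup.of (p + p', n) -
        FreeAbelianGroup.of (p, n) - FreeAbelianGroup.of (p', n)} ∪
     {x | ∃ (p : P) (n n' : N), x = FreeAbelianGroup.of (p, n + n') -
        FreeAbelianGroup.of (p, n) - FreeAbelianGroup.of (p, n')} ∪
     {x | ∃ (p : P) (s : S) (n : N), x = FreeAbelianGroup.of ((op s • p : P), n) -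
        FreeAbelianGroup.of (p, (s • n : N))})

/-- The tensor product `P ⊗_S N` of a right `S`-module and a left `S`-module. -/
def Tensor : Type u := FreeAbelianGroup (P × N) ⧸ tensorRel S P N

instance : AddCommGroup (Tensor S P N) :=
  inferInstanceAs (AddCommGroup (FreeAbelianGroup (P × N) ⧸ tensorRel S P N))

/-- The class of `p ⊗ n` in `P ⊗_S N`. -/
def Tensor.mk (p : P) (n : N) : Tensor S P N :=
  QuotientAddGroup.mk (FreeAbelianGroup.of (p, n))

theorem Tensor.mk_add_left (p p' : P) (n : N) :
    Tensor.mk S P N (p + p') n = Tensor.mk S P N p n + Tensor.mk S P N p' n := by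
  have h : FreeAbelianGroup.of (p + p', n) - FreeAbelianGroup.of (p, n) -
      FreeAbelianGroup.of (p', n) ∈ tensorRel S P N :=
    AddSubgroup.subset_closure (Or.inl (Or.inl ⟨p, p', n, rfl⟩))
  have := (QuotientAddGroup.eq_zero_iff _).mpr h
  rw [Tensor.mk, Tensor.mk, Tensor.mk]
  rw [sub_sub] at this
  rw [QuotientAddGroup.mk_sub] at this
  have h2 := sub_eq_zero.mp this
  rw [h2, QuotientAddGroup.mk_add]
  rfl

theorem Tensor.mk_add_right (p : P) (n n' : N) :
    Tensor.mk S P N p (n + n') = Tensor.mk S P N p n + Tensor.mk S P N p n' := by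
  have h : FreeAbelianGroup.of (p, n + n') - FreeAbelianGroup.of (p, n) -
      FreeAbelianGroup.of (p, n') ∈ tensorRel S P N :=
    AddSubgroup.subset_closure (Or.inl (Or.inr ⟨p, n, n', rfl⟩))
  have := (QuotientAddGroup.eq_zero_iff _).mpr h
  rw [Tensor.mk, Tensor.mk, Tensor.mk]
  rw [sub_sub] at this
  rw [QuotientAddGroup.mk_sub] at this
  have h2 := sub_eq_zero.mp this
  rw [h2, QuotientAddGroup.mk_add]
  rfl

theorem Tensor.mk_balanced (p : P) (s : S) (n : N) :
    Tensor.mk S P N (op s • p) n = Tensor.mk S P N p (s • n) := by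
  have h : FreeAbelianGroup.of ((op s • p : P), n) - FreeAbelianGroup.of (p, (s • n : N)) ∈
      tensorRel S P N := AddSubgroup.subset_closure (Or.inr ⟨p, s, n, rfl⟩)
  have := (QuotientAddGroup.eq_zero_iff _).mpr h
  rw [QuotientAddGroup.mk_sub] at this
  exact sub_eq_zero.mp this

/-- The additive endomorphism of the free abelian group induced by `r • −` on `P`. -/
def tensorSMulAux (r : R) : FreeAbelianGroup (P × N) →+ FreeAbelianGroup (P × N) :=
  FreeAbelianGroup.lift (fun q : P × N => FreeAbelianGroup.of ((r • q.1 : P), q.2))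

theorem tensorSMulAux_rel (r : R) :
    tensorRel S P N ≤ (tensorRel S P N).comap (tensorSMulAux R P N r) := by
  rw [tensorRel]
  rw [AddSubgroup.closure_le]
  rintro x (h | h)
  · rcases h with h | h
    · obtain ⟨p, p', n, rfl⟩ := h
      show tensorSMulAux R P N r _ ∈ tensorRel S P N
      rw [map_sub, map_sub]
      show FreeAbelianGroup.lift _ (FreeAbelianGroup.of _) -
        FreeAbelianGroup.lift _ (FreeAbelianGroup.of _) -
        FreeAbelianGroup.lift _ (FreeAbelianGroup.of _) ∈ _
      rw [FreeAbelianGroup.lift_apply_of, FreeAbelianGroup.lift_apply_of, FreeAbelianGroup.lift_apply_of]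
      refine AddSubgroup.subset_closure (Or.inl (Or.inl ⟨r • p, r • p', n, ?_⟩))
      rw [← LMod.smul_add']
    · obtain ⟨p, n, n', rfl⟩ := h
      show tensorSMulAux R P N r _ ∈ tensorRel S P N
      rw [map_sub, map_sub]
      show FreeAbelianGroup.lift _ (FreeAbelianGroup.of _) -
        FreeAbelianGroup.lift _ (FreeAbelianGroup.of _) -
        FreeAbelianGroup.lift _ (FreeAbelianGroup.of _) ∈ _
      rw [FreeAbelianGroup.lift_apply_of, FreeAbelianGroup.lift_apply_of, FreeAbelianGroup.lift_apply_of]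
      exact AddSubgroup.subset_closure (Or.inl (Or.inr ⟨r • p, n, n', rfl⟩))
  · obtain ⟨p, s, n, rfl⟩ := h
    show tensorSMulAux R P N r _ ∈ tensorRel S P N
    rw [map_sub]
    show FreeAbelianGroup.lift _ (FreeAbelianGroup.of _) -
      FreeAbelianGroup.lift _ (FreeAbelianGroup.of _) ∈ _
    rw [FreeAbelianGroup.lift_apply_of, FreeAbelianGroup.lift_apply_of]
    have hc : (r • (op s • p) : P) = op s • (r • p) := smul_comm r (op s) p
    rw [hc]
    exact AddSubgroup.subset_closure (Or.inr ⟨r • p, s, n, rfl⟩)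

/-- The scalar action of `R` on `P ⊗_S N`. -/
def tensorSMul (r : R) : Tensor S P N →+ Tensor S P N :=
  QuotientAddGroup.map _ _ (tensorSMulAux R P N r) (tensorSMulAux_rel R S P N r)

theorem tensorSMul_mk (r : R) (p : P) (n : N) :
    tensorSMul R S P N r (Tensor.mk S P N p n) = Tensor.mk S P N (r • p) n := by
  show QuotientAddGroup.mk (tensorSMulAux R P N r (FreeAbelianGroup.of (p, n))) = _
  rw [tensorSMulAux, FreeAbelianGroup.lift_apply_of]
  rfl

instance Tensor.instLMod : LMod R (Tensor S P N) where
  smul r t := tensorSMul R S P N r t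
  smul_add' r m n := map_add (tensorSMul R S P N r) m n
  add_smul' r r' t := by
    show tensorSMul R S P N (r + r') t = tensorSMul R S P N r t + tensorSMul R S P N r' t
    induction t using QuotientAddGroup.induction_on with
    | H z =>
      induction z using FreeAbelianGroup.induction_on with
      | zero =>
        rw [show ∀ {M : Type u} [AddCommGroup M] [LMod S M], @Eq (Tensor S P M) (QuotientAddGroup.mk 0) 0 from rfl, map_zero, map_zero, map_zero, add_zero]
      | of q =>
        obtain ⟨p, n⟩ := q
        show tensorSMul R S P N (r + r') (Tensor.mk S P N p n) =
          tensorSMul R S P N r (Tensor.mk S P N p n) +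
          tensorSMul R S P N r' (Tensor.mk S P N p n)
        rw [tensorSMul_mk, tensorSMul_mk, tensorSMul_mk, LMod.add_smul']
        exact Tensor.mk_add_left S P N _ _ _
      | neg z ih =>
        rw [show ∀ {M : Type u} [AddCommGroup M] [LMod S M] (a : FreeAbelianGroup (P × M)), @Eq (Tensor S P M) (QuotientAddGroup.mk (-a)) (@Neg.neg (Tensor S P M) _ (@id (Tensor S P M) (QuotientAddGroup.mk a))) from fun _ => rfl, map_neg, map_neg, map_neg] ; dsimp only [id]; rw [ih, neg_add]
      | add z w ihz ihw =>
        rw [show ∀ {M : Type u} [AddCommGroup M] [LMod S M] (a b : FreeAbelianGroup (P × M)), @Eq (Tensor S P M) (QuotientAddGroup.mk (a + b)) (@HAdd.hAdd (Tensor S P M) (Tensor S P M) (Tensor S P M) _ (@id (Tensor S P M) (QuotientAddGroup.mk a)) (@id (Tensor S P M) (QuotientAddGroup.mk b))) from fun _ _ => rfl, map_add, map_add, map_add] ; dsimp only [id]; rw [ihz, ihw]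
        abel
  mul_smul' r r' t := by
    show tensorSMul R S P N (r * r') t = tensorSMul R S P N r (tensorSMul R S P N r' t)
    induction t using QuotientAddGroup.induction_on with
    | H z =>
      induction z using FreeAbelianGroup.induction_on with
      | zero =>
        rw [show ∀ {M : Type u} [AddCommGroup M] [LMod S M], @Eq (Tensor S P M) (QuotientAddGroup.mk 0) 0 from rfl, map_zero, map_zero, map_zero]
      | of q =>
        obtain ⟨p, n⟩ := q
        show tensorSMul R S P N (r * r') (Tensor.mk S P N p n) =
          tensorSMul R S P N r (tensorSMul R S P N r' (Tensor.mk S P N p n))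
        rw [tensorSMul_mk, tensorSMul_mk, tensorSMul_mk, LMod.mul_smul']
      | neg z ih =>
        rw [show ∀ {M : Type u} [AddCommGroup M] [LMod S M] (a : FreeAbelianGroup (P × M)), @Eq (Tensor S P M) (QuotientAddGroup.mk (-a)) (@Neg.neg (Tensor S P M) _ (@id (Tensor S P M) (QuotientAddGroup.mk a))) from fun _ => rfl, map_neg, map_neg, map_neg] ; dsimp only [id]; rw [ih]
      | add z w ihz ihw =>
        rw [show ∀ {M : Type u} [AddCommGroup M] [LMod S M] (a b : FreeAbelianGroup (P × M)), @Eq (Tensor S P M) (QuotientAddGroup.mk (a + b)) (@HAdd.hAdd (Tensor S P M) (Tensor S P M) (Tensor S P M) _ (@id (Tensor S P M) (QuotientAddGroup.mk a)) (@id (Tensor S P M) (QuotientAddGroup.mk b))) from fun _ _ => rfl, map_add, map_add, map_add] ; dsimp only [id]; rw [ihz, ihw]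

theorem Tensor.smul_mk (r : R) (p : P) (n : N) :
    r • (Tensor.mk S P N p n) = Tensor.mk S P N (r • p) n := tensorSMul_mk R S P N r p n

/-- If `P` is a unitary left `R`-module, so is `P ⊗_S N`. -/
theorem Tensor.unitary (hP : IsUnitary R P) : IsUnitary R (Tensor S P N) := by
  intro t
  induction t using QuotientAddGroup.induction_on with
  | H z =>
    induction z using FreeAbelianGroup.induction_on with
    | zero =>
      show (0 : Tensor S P N) ∈ _
      exact AddSubgroup.zero_mem _
    | of q =>
      obtain ⟨p, n⟩ := q
      show Tensor.mk S P N p n ∈ _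
      have hp := hP p
      induction hp using AddSubgroup.closure_induction with
      | mem x hx =>
        obtain ⟨r, p', rfl⟩ := hx
        exact AddSubgroup.subset_closure ⟨r, Tensor.mk S P N p' n, (Tensor.smul_mk R S P N r p' n).symm⟩
      | zero =>
        have : Tensor.mk S P N 0 n = 0 := by
          have h := Tensor.mk_add_left S P N (0 : P) 0 n
          rw [add_zero] at h
          have h2 : Tensor.mk S P N 0 n + Tensor.mk S P N 0 n = Tensor.mk S P N 0 n + 0 := by
            rw [← h, add_zero]
          exact add_left_cancel h2
        rw [this]; exact AddSubgroup.zero_mem _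
      | add x y hx hy ihx ihy =>
        rw [Tensor.mk_add_left S P N]; exact AddSubgroup.add_mem _ ihx ihy
      | neg x hx ihx =>
        have : Tensor.mk S P N (-x) n = -Tensor.mk S P N x n := by
          have h : Tensor.mk S P N x n + Tensor.mk S P N (-x) n = 0 := by
            rw [← Tensor.mk_add_left S P N, add_neg_cancel]
            have h := Tensor.mk_add_left S P N (0 : P) 0 n
            rw [add_zero] at h
            have h2 : Tensor.mk S P N 0 n + Tensor.mk S P N 0 n = Tensor.mk S P N 0 n + 0 := by
              rw [← h, add_zero]
            exact add_left_cancel h2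
          exact eq_neg_of_add_eq_zero_right h
        rw [this]; exact AddSubgroup.neg_mem _ ihx
    | neg z ih =>
      rw [QuotientAddGroup.mk_neg]; exact AddSubgroup.neg_mem _ ih
    | add z w ihz ihw =>
      rw [QuotientAddGroup.mk_add]; exact AddSubgroup.add_mem _ ihz ihw

/-- The map `1 ⊗ f` on tensor products induced by an `S`-homomorphism `f`. -/
def tensorMapAux {N N' : Type u} [AddCommGroup N] [AddCommGroup N'] [LMod S N]
    [LMod S N'] (f : LinMap S N N') :
    FreeAbelianGroup (P × N) →+ FreeAbelianGroup (P × N') :=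
  FreeAbelianGroup.lift (fun q : P × N => FreeAbelianGroup.of (q.1, f.1 q.2))

theorem tensorMapAux_rel {N N' : Type u} [AddCommGroup N] [AddCommGroup N'] [LMod S N]
    [LMod S N'] (f : LinMap S N N') :
    tensorRel S P N ≤ (tensorRel S P N').comap (tensorMapAux S P f) := by
  rw [tensorRel, AddSubgroup.closure_le]
  rintro x (h | h)
  · rcases h with h | h
    · obtain ⟨p, p', n, rfl⟩ := h
      show tensorMapAux S P f _ ∈ tensorRel S P N'
      rw [map_sub, map_sub]
      show FreeAbelianGroup.lift _ (FreeAbelianGroup.of _) -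
        FreeAbelianGroup.lift _ (FreeAbelianGroup.of _) -
        FreeAbelianGroup.lift _ (FreeAbelianGroup.of _) ∈ _
      rw [FreeAbelianGroup.lift_apply_of, FreeAbelianGroup.lift_apply_of, FreeAbelianGroup.lift_apply_of]
      exact AddSubgroup.subset_closure (Or.inl (Or.inl ⟨p, p', f.1 n, rfl⟩))
    · obtain ⟨p, n, n', rfl⟩ := h
      show tensorMapAux S P f _ ∈ tensorRel S P N'
      rw [map_sub, map_sub]
      show FreeAbelianGroup.lift _ (FreeAbelianGroup.of _) -
        FreeAbelianGroup.lift _ (FreeAbelianGroup.of _) -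
        FreeAbelianGroup.lift _ (FreeAbelianGroup.of _) ∈ _
      rw [FreeAbelianGroup.lift_apply_of, FreeAbelianGroup.lift_apply_of, FreeAbelianGroup.lift_apply_of,
        f.2.map_add]
      exact AddSubgroup.subset_closure (Or.inl (Or.inr ⟨p, f.1 n, f.1 n', rfl⟩))
  · obtain ⟨p, s, n, rfl⟩ := h
    show tensorMapAux S P f _ ∈ tensorRel S P N'
    rw [map_sub]
    show FreeAbelianGroup.lift _ (FreeAbelianGroup.of _) -
      FreeAbelianGroup.lift _ (FreeAbelianGroup.of _) ∈ _
    rw [FreeAbelianGroup.lift_apply_of, FreeAbelianGroup.lift_apply_of, f.2.map_smul]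
    exact AddSubgroup.subset_closure (Or.inr ⟨p, s, f.1 n, rfl⟩)

/-- The homomorphism `P ⊗_S N → P ⊗_S N'` induced by `f : N → N'`. -/
def tensorMap {N N' : Type u} [AddCommGroup N] [AddCommGroup N'] [LMod S N]
    [LMod S N'] (f : LinMap S N N') : Tensor S P N →+ Tensor S P N' :=
  QuotientAddGroup.map _ _ (tensorMapAux S P f) (tensorMapAux_rel S P f)

theorem tensorMap_mk {N N' : Type u} [AddCommGroup N] [AddCommGroup N'] [LMod S N]
    [LMod S N'] (f : LinMap S N N') (p : P) (n : N) :
    tensorMap S P f (Tensor.mk S P N p n) = Tensor.mk S P N' p (f.1 n) := by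
  show QuotientAddGroup.mk (tensorMapAux S P f (FreeAbelianGroup.of (p, n))) = _
  rw [tensorMapAux, FreeAbelianGroup.lift_apply_of]
  rfl

theorem tensorMap_tensorSMul {N N' : Type u} [AddCommGroup N] [AddCommGroup N'] [LMod S N]
    [LMod S N'] (f : LinMap S N N') (r : R) (t : Tensor S P N) :
    tensorMap S P f (tensorSMul R S P N r t) = tensorSMul R S P N' r (tensorMap S P f t) := by
  induction t using QuotientAddGroup.induction_on with
  | H z =>
    induction z using FreeAbelianGroup.induction_on with
    | zero => rw [show ∀ {M : Type u} [AddCommGroup M] [LMod S M], @Eq (Tensor S P M) (QuotientAddGroup.mk 0) 0 from rfl, map_zero, map_zero, map_zero]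
    | of q =>
      obtain ⟨p, n⟩ := q
      show tensorMap S P f (tensorSMul R S P N r (Tensor.mk S P N p n)) =
        tensorSMul R S P N' r (tensorMap S P f (Tensor.mk S P N p n))
      rw [tensorSMul_mk, tensorMap_mk, tensorMap_mk, tensorSMul_mk]
    | neg q ih =>
      rw [show ∀ {M : Type u} [AddCommGroup M] [LMod S M] (a : FreeAbelianGroup (P × M)), @Eq (Tensor S P M) (QuotientAddGroup.mk (-a)) (@Neg.neg (Tensor S P M) _ (@id (Tensor S P M) (QuotientAddGroup.mk a))) from fun _ => rfl, map_neg, map_neg, map_neg, map_neg] ; dsimp only [id]; rw [ih]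
    | add z w ihz ihw =>
      rw [show ∀ {M : Type u} [AddCommGroup M] [LMod S M] (a b : FreeAbelianGroup (P × M)), @Eq (Tensor S P M) (QuotientAddGroup.mk (a + b)) (@HAdd.hAdd (Tensor S P M) (Tensor S P M) (Tensor S P M) _ (@id (Tensor S P M) (QuotientAddGroup.mk a)) (@id (Tensor S P M) (QuotientAddGroup.mk b))) from fun _ _ => rfl, map_add, map_add, map_add, map_add] ; dsimp only [id]; rw [ihz, ihw]

theorem tensorMap_smul {N N' : Type u} [AddCommGroup N] [AddCommGroup N'] [LMod S N]
    [LMod S N'] (f : LinMap S N N') (r : R) (t : Tensor S P N) :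
    tensorMap S P f (r • t) = r • tensorMap S P f t :=
  tensorMap_tensorSMul R S P f r t

/-- The functor `P ⊗_S −` from unitary left `S`-modules to unitary left
`R`-modules, for a unitary `R`-`S`-bimodule `P`. -/
def tensorF [HasLocalUnits S] (hP : IsUnitary R P) : UMod.{u, u} S ⥤ UMod.{u, u} R where
  obj N := ⟨Tensor S P N.carrier, Tensor.unitary R S P N.carrier hP⟩
  map f := ⟨fun t => tensorMap S P f t,
    ⟨fun x y => map_add (tensorMap S P f) x y, fun r t => tensorMap_smul R S P f r t⟩⟩
  map_id N := by
    refine LinMap.ext (funext fun t => ?_)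
    show tensorMap S P (𝟙 N) t = t
    induction t using QuotientAddGroup.induction_on with
    | H z =>
      induction z using FreeAbelianGroup.induction_on with
      | zero => rw [show ∀ {M : Type u} [AddCommGroup M] [LMod S M], @Eq (Tensor S P M) (QuotientAddGroup.mk 0) 0 from rfl, map_zero]
      | of q =>
        obtain ⟨p, n⟩ := q
        show tensorMap S P (𝟙 N) (Tensor.mk S P N.carrier p n) = Tensor.mk S P N.carrier p n
        rw [tensorMap_mk]
        rfl
      | neg q ih =>
        rw [show ∀ {M : Type u} [AddCommGroup M] [LMod S M] (a : FreeAbelianGroup (P × M)), @Eq (Tensor S P M) (QuotientAddGroup.mk (-a)) (@Neg.neg (Tensor S P M) _ (@id (Tensor S P M) (QuotientAddGroup.mk a))) from fun _ => rfl, map_neg] ; dsimp only [id]; rw [ih]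
      | add z w ihz ihw =>
        rw [show ∀ {M : Type u} [AddCommGroup M] [LMod S M] (a b : FreeAbelianGroup (P × M)), @Eq (Tensor S P M) (QuotientAddGroup.mk (a + b)) (@HAdd.hAdd (Tensor S P M) (Tensor S P M) (Tensor S P M) _ (@id (Tensor S P M) (QuotientAddGroup.mk a)) (@id (Tensor S P M) (QuotientAddGroup.mk b))) from fun _ _ => rfl, map_add] ; dsimp only [id]; rw [ihz, ihw]
  map_comp {N N' N''} f g := by
    refine LinMap.ext (funext fun t => ?_)
    show tensorMap S P (f ≫ g) t = tensorMap S P g (tensorMap S P f t)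
    induction t using QuotientAddGroup.induction_on with
    | H z =>
      induction z using FreeAbelianGroup.induction_on with
      | zero => rw [show ∀ {M : Type u} [AddCommGroup M] [LMod S M], @Eq (Tensor S P M) (QuotientAddGroup.mk 0) 0 from rfl, map_zero, map_zero, map_zero]
      | of q =>
        obtain ⟨p, n⟩ := q
        show tensorMap S P (f ≫ g) (Tensor.mk S P N.carrier p n) =
          tensorMap S P g (tensorMap S P f (Tensor.mk S P N.carrier p n))
        rw [tensorMap_mk, tensorMap_mk, tensorMap_mk]
        rfl
      | neg q ih =>
        rw [show ∀ {M : Type u} [AddCommGroup M] [LMod S M] (a : FreeAbelianGroup (P × M)), @Eq (Tensor S P M) (QuotientAddGroup.mk (-a)) (@Neg.neg (Tensor S P M) _ (@id (Tensor S P M) (QuotientAddGroup.mk a))) from fun _ => rfl, map_neg, map_neg, map_neg] ; dsimp only [id]; rw [ih]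
      | add z w ihz ihw =>
        rw [show ∀ {M : Type u} [AddCommGroup M] [LMod S M] (a b : FreeAbelianGroup (P × M)), @Eq (Tensor S P M) (QuotientAddGroup.mk (a + b)) (@HAdd.hAdd (Tensor S P M) (Tensor S P M) (Tensor S P M) _ (@id (Tensor S P M) (QuotientAddGroup.mk a)) (@id (Tensor S P M) (QuotientAddGroup.mk b))) from fun _ _ => rfl, map_add, map_add, map_add] ; dsimp only [id]; rw [ihz, ihw]

end tensor


/-! The adjunction is the classical currying bijection `Hom_R(P ⊗_S N, M) ≅ Hom_S(N, Hom_R(P, M))`,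
`F ↦ (n ↦ (p ↦ F (p ⊗ n)))`. The only new point is that for unitary `N` the curried map lands
in `S·Hom_R(P, M)`: it is `S`-linear, and `N = S·N`. -/

section tensorLift

variable {S : Type u} [NonUnitalRing S] {P : Type u} [AddCommGroup P] [LMod Sᵐᵒᵖ P]
variable {N : Type u} [AddCommGroup N] [LMod S N] {A : Type v} [AddCommGroup A]

theorem Tensor.addHom_ext {f g : Tensor S P N →+ A}
    (h : ∀ p n, f (Tensor.mk S P N p n) = g (Tensor.mk S P N p n)) : f = g :=
  QuotientAddGroup.addMonoidHom_ext _ (FreeAbelianGroup.lift_ext _ _ fun q => h q.1 q.2)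

def Tensor.lift (φ : P → N → A) (add_left : ∀ p p' n, φ (p + p') n = φ p n + φ p' n)
    (add_right : ∀ p n n', φ p (n + n') = φ p n + φ p n')
    (balanced : ∀ p (s : S) n, φ (op s • p) n = φ p (s • n)) : Tensor S P N →+ A :=
  QuotientAddGroup.lift _ (FreeAbelianGroup.lift fun q => φ q.1 q.2) <| by
    rw [tensorRel, AddSubgroup.closure_le]
    rintro x ((⟨p, p', n, rfl⟩ | ⟨p, n, n', rfl⟩) | ⟨p, s, n, rfl⟩) <;>
      simp [add_left, add_right, balanced]

@[simp] theorem Tensor.lift_mk (φ : P → N → A) (add_left add_right balanced) (p : P) (n : N) :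
    Tensor.lift (S := S) φ add_left add_right balanced (Tensor.mk S P N p n) = φ p n :=
  FreeAbelianGroup.lift_apply_of _ _

end tensorLift

section curry

variable {R S : Type u} [NonUnitalRing R] [NonUnitalRing S]
variable {P : Type u} [AddCommGroup P] [LMod R P] [LMod Sᵐᵒᵖ P] [SMulCommClass R Sᵐᵒᵖ P]
variable {N M : Type u} [AddCommGroup N] [LMod S N] [AddCommGroup M] [LMod R M]

theorem Tensor.linMap_ext {f g : LinMap R (Tensor S P N) M}
    (h : ∀ p n, f.1 (Tensor.mk S P N p n) = g.1 (Tensor.mk S P N p n)) : f = g :=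
  LinMap.ext <| funext <| DFunLike.congr_fun <| Tensor.addHom_ext
    (f := AddMonoidHom.mk' f.1 f.2.map_add) (g := AddMonoidHom.mk' g.1 g.2.map_add) h

def tensorCurryAt (F : LinMap R (Tensor S P N) M) (n : N) : LinMap R P M :=
  ⟨fun p => F.1 (Tensor.mk S P N p n),
   ⟨fun p p' => by rw [Tensor.mk_add_left, F.2.map_add],
    fun r p => by rw [← Tensor.smul_mk, F.2.map_smul]⟩⟩

theorem tensorCurryAt_isLHom (F : LinMap R (Tensor S P N) M) : IsLHom S (tensorCurryAt F) where
  map_add n n' := LinMap.ext <| funext fun p =>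
    (congrArg F.1 (Tensor.mk_add_right S P N p n n')).trans (F.2.map_add _ _)
  map_smul s n := LinMap.ext <| funext fun p => congrArg F.1 (Tensor.mk_balanced S P N p s n).symm

def tensorCurry (hN : IsUnitary S N) (F : LinMap R (Tensor S P N) M) :
    LinMap S N (SHom R S P M) :=
  ⟨fun n => ⟨tensorCurryAt F n,
    umax_mapsTo _ (tensorCurryAt_isLHom F).map_add (tensorCurryAt_isLHom F).map_smul (hN n)⟩,
   ⟨fun n n' => Subtype.ext ((tensorCurryAt_isLHom F).map_add n n'),
    fun s n => Subtype.ext ((tensorCurryAt_isLHom F).map_smul s n)⟩⟩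

def tensorUncurryAddHom (G : LinMap S N (SHom R S P M)) : Tensor S P N →+ M :=
  Tensor.lift (fun p n => (G.1 n).1.1 p)
    (fun p p' n => (G.1 n).1.2.map_add p p')
    (fun p n n' => by rw [G.2.map_add]; rfl)
    (fun p s n => by rw [G.2.map_smul]; rfl)

def tensorUncurry (G : LinMap S N (SHom R S P M)) : LinMap R (Tensor S P N) M :=
  ⟨tensorUncurryAddHom G, ⟨map_add _, fun r t => by
    have h : (tensorUncurryAddHom G).comp (tensorSMul R S P N r) =
        (AddMonoidHom.mk' (r • · : M → M) (LMod.smul_add' r)).comp (tensorUncurryAddHom G) :=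
      Tensor.addHom_ext fun p n => by
        simp only [AddMonoidHom.comp_apply, tensorSMul_mk, tensorUncurryAddHom, Tensor.lift_mk,
          AddMonoidHom.mk'_apply]
        exact (G.1 n).1.2.map_smul r p
    exact DFunLike.congr_fun h t⟩⟩

@[simp] theorem tensorUncurry_mk (G : LinMap S N (SHom R S P M)) (p : P) (n : N) :
    (tensorUncurry G).1 (Tensor.mk S P N p n) = (G.1 n).1.1 p :=
  Tensor.lift_mk _ _ _ _ p n

def tensorHomEquiv (hN : IsUnitary S N) :
    LinMap R (Tensor S P N) M ≃ LinMap S N (SHom R S P M) where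
  toFun := tensorCurry hN
  invFun := tensorUncurry
  left_inv F := Tensor.linMap_ext fun p n => tensorUncurry_mk _ p n
  right_inv G := LinMap.ext <| funext fun n => Subtype.ext <| LinMap.ext <| funext fun p =>
    tensorUncurry_mk G p n

end curry

theorem tensor_adjoint_sHom_general
    (R S : Type u) [NonUnitalRing R] [NonUnitalRing S]
    [HasLocalUnits S]
    (P : Type u) [AddCommGroup P] [LMod R P] [LMod Sᵐᵒᵖ P] [SMulCommClass R Sᵐᵒᵖ P]
    (hP : IsUnitary R P) :
    Nonempty (tensorF R S P hP ⊣ sHomF R S P) :=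
  ⟨Adjunction.mkOfHomEquiv
    { homEquiv := fun N M => tensorHomEquiv N.unitary
      homEquiv_naturality_left_symm := fun f g => Tensor.linMap_ext fun p n =>
        (tensorUncurry_mk (f ≫ g) p n).trans
          ((tensorUncurry_mk g p (f.1 n)).symm.trans (congrArg _ (tensorMap_mk S P f p n).symm))
      homEquiv_naturality_right := fun _ _ => rfl }⟩

theorem tensor_adjoint_sHom
    (R S : Type u) [NonUnitalRing R] [NonUnitalRing S]
    [HasLocalUnits R] [HasLocalUnits S]
    (P : Type u) [AddCommGroup P] [LMod R P] [LMod Sᵐᵒᵖ P] [SMulCommClass R Sᵐᵒᵖ P]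
    (hP : IsUnitary R P) :
    Nonempty (tensorF R S P hP ⊣ sHomF R S P) :=
  tensor_adjoint_sHom_general R S P hP
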